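/- arXiv:2503.05469 — 3 statements merged into one kernel-verified Lean document; each statement's English description precedes it below -/
import Mathlib

section
/- Let (Y_i)_{i=1}^d and a filtration (F_i)_{i=0}^d with Y_{i+1} measurable w.r.t. F_{i+1} be such that P(|Y_{i+1}| ≥ k | F_i) ≥ ε almost surely for each i. Then on an enlarged probability space there exist random subsets X_i ⊆ Y_i of cardinality |X_i| ∈ {0, k} such that |X_1|, ..., |X_d| are independent with P(|X_i| = k) = ε and P(|X_i| = 0) = 1 - ε. -/
/-!
Accept the event `Bᵢ = {k ≤ |Y_{i+1}|}` when an independent uniform `Uᵢ` falls below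
`ε / P(Bᵢ | Fᵢ)`. The accepted event `Aᵢ` then has conditional probability exactly `ε` given
`Fᵢ` and is `F_{i+1}`-measurable given the uniforms, so peeling off the largest index with the
tower property gives `P(A_{i₁} ∩ ⋯ ∩ A_{iₙ}) = εⁿ`: the `Aᵢ` are independent events of
probability `ε`. Take `X_{i+1}` to be a `k`-subset of `Y_{i+1}` on `Aᵢ` and empty off it.
-/

open MeasureTheory ProbabilityTheory Finset
open scoped unitInterval

namespace Decoupling

variable {Ω : Type*} [m : MeasurableSpace Ω] {P : Measure Ω}

lemma integral_mul_eq_of_condExp_eq_const {F : MeasurableSpace Ω} (hF : F ≤ m)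
    [SigmaFinite (P.trim hF)] {q f : Ω → ℝ} {ε : ℝ} (hf : StronglyMeasurable[F] f)
    (hq : Integrable q P) (hqf : Integrable (q * f) P) (hqε : P[q | F] =ᵐ[P] fun _ => ε) :
    ∫ ω, q ω * f ω ∂P = ε * ∫ ω, f ω ∂P :=
  calc ∫ ω, q ω * f ω ∂P = ∫ ω, P[q * f | F] ω ∂P := (integral_condExp hF).symm
    _ = ∫ ω, ε * f ω ∂P := integral_congr_ae <| by
        filter_upwards [condExp_mul_of_stronglyMeasurable_right hf hqf hq, hqε] with ω h1 h2
        rw [h1, Pi.mul_apply, h2]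
    _ = ε * ∫ ω, f ω ∂P := integral_const_mul ε _

lemma integral_prod_eq_pow_of_condExp_eq_const [IsProbabilityMeasure P]
    {F : ℕ → MeasurableSpace Ω} (hF : ∀ i, F i ≤ m) (hFmono : Monotone F) {q : ℕ → Ω → ℝ}
    {ε : ℝ} (hq : ∀ i, StronglyMeasurable[F (i + 1)] (q i)) (hq1 : ∀ i ω, ‖q i ω‖ ≤ 1)
    (S : Finset ℕ) (hqε : ∀ i ∈ S, P[q i | F i] =ᵐ[P] fun _ => ε) :
    ∫ ω, ∏ i ∈ S, q i ω ∂P = ε ^ #S := by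
  classical
  induction S using Finset.induction_on_max with
  | empty => simp
  | insert a S hlt ih =>
    have haS : a ∉ S := fun ha => (hlt a ha).false
    have hprod : StronglyMeasurable[F a] fun ω => ∏ i ∈ S, q i ω :=
      Finset.stronglyMeasurable_fun_prod _ fun i hi => (hq i).mono (hFmono (hlt i hi))
    have hqa : StronglyMeasurable (q a) := (hq a).mono (hF _)
    have hqa_prod : ∀ ω, ‖q a ω * ∏ i ∈ S, q i ω‖ ≤ 1 := fun ω => by
      rw [norm_mul, norm_prod]
      exact mul_le_one₀ (hq1 a ω) (prod_nonneg fun _ _ => norm_nonneg _)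
        (prod_le_one (fun _ _ => norm_nonneg _) fun i _ => hq1 i ω)
    simp_rw [prod_insert haS, card_insert_of_notMem haS]
    rw [integral_mul_eq_of_condExp_eq_const (hF a) hprod
        (.of_bound hqa.aestronglyMeasurable 1 (.of_forall (hq1 a)))
        (.of_bound (hqa.mul (hprod.mono (hF a))).aestronglyMeasurable 1 (.of_forall hqa_prod))
        (hqε a (mem_insert_self a S)),
      ih fun i hi => hqε i (mem_insert_of_mem hi), pow_succ']

/-- The acceptance probability `ε / P(B i | F i)` on `B i`; the `max` caps it at `1`. -/
noncomputable def thinning (P : Measure Ω) (F : ℕ → MeasurableSpace Ω) (B : ℕ → Set Ω) (ε : ℝ)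
    (i : ℕ) : Ω → ℝ :=
  (B i).indicator fun ω => ε / max ε (P[(B i).indicator (fun _ => (1 : ℝ)) | F i] ω)

variable {F : ℕ → MeasurableSpace Ω} {B : ℕ → Set Ω} {ε : ℝ}

lemma thinning_mem_Icc (hε : 0 ≤ ε) (i : ℕ) (ω : Ω) : thinning P F B ε i ω ∈ Set.Icc 0 1 := by
  by_cases hω : ω ∈ B i
  · rw [thinning, Set.indicator_of_mem hω]
    exact ⟨div_nonneg hε (hε.trans (le_max_left _ _)),
      div_le_one_of_le₀ (le_max_left _ _) (hε.trans (le_max_left _ _))⟩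
  · simp [thinning, Set.indicator_of_notMem hω]

lemma norm_thinning_le_one (hε : 0 ≤ ε) (i : ℕ) (ω : Ω) : ‖thinning P F B ε i ω‖ ≤ 1 := by
  obtain ⟨h0, h1⟩ := thinning_mem_Icc (P := P) (F := F) (B := B) hε i ω
  rwa [Real.norm_of_nonneg h0]

lemma stronglyMeasurable_div_max_condExp (i : ℕ) :
    StronglyMeasurable[F i] fun ω => ε / max ε (P[(B i).indicator (fun _ => (1 : ℝ)) | F i] ω) :=
  (measurable_const.div
    (measurable_const.max stronglyMeasurable_condExp.measurable)).stronglyMeasurable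

lemma stronglyMeasurable_thinning (hFmono : Monotone F)
    (hB : ∀ i, MeasurableSet[F (i + 1)] (B i)) (i : ℕ) :
    StronglyMeasurable[F (i + 1)] (thinning P F B ε i) :=
  (stronglyMeasurable_div_max_condExp i).mono (hFmono i.le_succ) |>.indicator (hB i)

lemma condExp_thinning [IsFiniteMeasure P] (hF : ∀ i, F i ≤ m) (hFmono : Monotone F)
    (hB : ∀ i, MeasurableSet[F (i + 1)] (B i)) (hε : 0 < ε) {i : ℕ}
    (hBε : ∀ᵐ ω ∂P, ε ≤ P[(B i).indicator (fun _ => (1 : ℝ)) | F i] ω) :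
    P[thinning P F B ε i | F i] =ᵐ[P] fun _ => ε := by
  set h := P[(B i).indicator (fun _ => (1 : ℝ)) | F i]
  have hthin : thinning P F B ε i =
      (B i).indicator (fun _ => (1 : ℝ)) * fun ω => ε / max ε (h ω) := by
    ext ω; by_cases hω : ω ∈ B i <;> simp [thinning, hω, h]
  have hint : Integrable (thinning P F B ε i) P :=
    .of_bound ((stronglyMeasurable_thinning hFmono hB i).mono (hF _)).aestronglyMeasurable 1
      (.of_forall (norm_thinning_le_one hε.le i))
  rw [hthin] at hint ⊢
  filter_upwards [condExp_mul_of_stronglyMeasurable_right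
    (stronglyMeasurable_div_max_condExp (P := P) (F := F) (B := B) (ε := ε) i)
    hint ((integrable_const 1).indicator (hF _ _ (hB i))), hBε] with ω hω hεω
  rw [hω, Pi.mul_apply, max_eq_right hεω, mul_div_cancel₀ _ (hε.trans_le hεω).ne']

section Noise

universe v

/-- Lifted so that `Ω × Noise` lives in the universe of the enlarged space. -/
abbrev Noise : Type v := ULift.{v} (ℕ → I)

noncomputable def noiseMeasure : Measure Noise.{v} :=
  (Measure.infinitePi fun _ => volume).map MeasurableEquiv.ulift.symm

instance : IsProbabilityMeasure noiseMeasure.{v} :=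
  Measure.isProbabilityMeasure_map (MeasurableEquiv.measurable _).aemeasurable

lemma noiseMeasure_setOf_forall_lt (S : Finset ℕ) {c : ℕ → ℝ} (hc : ∀ i, c i ∈ Set.Icc 0 1) :
    noiseMeasure.{v} {u | ∀ i ∈ S, (u.down i : ℝ) < c i} = ∏ i ∈ S, ENNReal.ofReal (c i) := by
  have hpi : MeasurableEquiv.ulift.symm ⁻¹' {u : Noise.{v} | ∀ i ∈ S, (u.down i : ℝ) < c i} =
      (S : Set ℕ).pi fun i => Set.Iio (⟨c i, hc i⟩ : I) := by
    ext u; simp [← Subtype.coe_lt_coe]; rfl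
  rw [noiseMeasure, MeasurableEquiv.map_apply, hpi,
    Measure.infinitePi_pi _ fun _ _ => measurableSet_Iio]
  simp

def acceptance (q : ℕ → Ω → ℝ) (i : ℕ) : Set (Ω × Noise.{v}) :=
  {p | (p.2.down i : ℝ) < q i p.1}

lemma measurableSet_acceptance {q : ℕ → Ω → ℝ} {i : ℕ} (hq : Measurable (q i)) :
    MeasurableSet (acceptance.{v} q i) :=
  measurableSet_lt (by fun_prop) (hq.comp measurable_fst)

lemma fst_mem_of_mem_acceptance_thinning {i : ℕ} {p : Ω × Noise.{v}}
    (hp : p ∈ acceptance (thinning P F B ε) i) : p.1 ∈ B i := by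
  by_contra hpB
  have hq : thinning P F B ε i p.1 = 0 := Set.indicator_of_notMem hpB _
  exact (p.2.down i).2.1.not_gt (hq ▸ hp)

lemma measure_prod_biInter_acceptance [IsFiniteMeasure P] {q : ℕ → Ω → ℝ}
    (hq : ∀ i, Measurable (q i)) (hq01 : ∀ i ω, q i ω ∈ Set.Icc 0 1) (S : Finset ℕ) :
    (P.prod noiseMeasure.{v}) (⋂ i ∈ S, acceptance q i) =
      ENNReal.ofReal (∫ ω, ∏ i ∈ S, q i ω ∂P) := by
  have hprod_nonneg : ∀ ω, 0 ≤ ∏ i ∈ S, q i ω := fun ω => prod_nonneg fun i _ => (hq01 i ω).1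
  have hprod_int : Integrable (fun ω => ∏ i ∈ S, q i ω) P := by
    refine .of_bound (Finset.measurable_fun_prod S fun i _ => hq i).aestronglyMeasurable 1
      (.of_forall fun ω => ?_)
    rw [Real.norm_of_nonneg (hprod_nonneg ω)]
    exact prod_le_one (fun i _ => (hq01 i ω).1) fun i _ => (hq01 i ω).2
  rw [Measure.prod_apply (measurableSet_biInter S fun i _ => measurableSet_acceptance (hq i)),
    ofReal_integral_eq_lintegral_ofReal hprod_int (.of_forall hprod_nonneg)]
  refine lintegral_congr fun ω => ?_
  rw [ENNReal.ofReal_prod_of_nonneg fun i _ => (hq01 i ω).1,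
    ← noiseMeasure_setOf_forall_lt S (hq01 · ω)]
  congr 1
  ext u
  simp [acceptance]

lemma measure_prod_biInter_acceptance_thinning [IsProbabilityMeasure P] (hF : ∀ i, F i ≤ m)
    (hFmono : Monotone F) (hB : ∀ i, MeasurableSet[F (i + 1)] (B i)) (hε : 0 < ε)
    (S : Finset ℕ) (hBε : ∀ i ∈ S, ∀ᵐ ω ∂P, ε ≤ P[(B i).indicator (fun _ => (1 : ℝ)) | F i] ω) :
    (P.prod noiseMeasure.{v}) (⋂ i ∈ S, acceptance (thinning P F B ε) i) =
      ENNReal.ofReal ε ^ #S := by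
  rw [measure_prod_biInter_acceptance
      (fun i => ((stronglyMeasurable_thinning hFmono hB i).mono (hF _)).measurable)
      (thinning_mem_Icc hε.le) S,
    integral_prod_eq_pow_of_condExp_eq_const hF hFmono (stronglyMeasurable_thinning hFmono hB)
      (norm_thinning_le_one hε.le) S fun i hi => condExp_thinning hF hFmono hB hε (hBε i hi),
    ENNReal.ofReal_pow hε.le]

end Noise

lemma iIndepSet_of_measure_biInter_eq_pow {Ω' : Type*} [MeasurableSpace Ω'] {μ : Measure Ω'}
    {A : ℕ → Set Ω'} (hA : ∀ i, MeasurableSet (A i)) {d : ℕ} {p : ENNReal}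
    (hAp : ∀ S : Finset ℕ, (∀ i ∈ S, i < d) → μ (⋂ i ∈ S, A i) = p ^ #S) :
    iIndepSet (fun i : Fin d => A i) μ := by
  have hsingle : ∀ i : Fin d, μ (A i) = p := fun i => by
    simpa using hAp {(i : ℕ)} (by simp)
  refine (iIndepSet_iff_meas_biInter (f := fun i : Fin d => A i) fun i => hA i).2 fun S => ?_
  simpa [hsingle] using hAp (S.map Fin.valEmbedding) (by simp)

section Selection

variable {Ω' α : Type*} (k : ℕ) (A : ℕ → Set Ω') (Y : ℕ → Ω' → Finset α)

open Classical in
noncomputable def selection : ℕ → Ω' → Finset α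
  | 0, _ => ∅
  | i + 1, p => if h : p ∈ A i ∧ k ≤ #(Y (i + 1) p) then (exists_subset_card_eq h.2).choose else ∅

lemma selection_subset : ∀ i p, selection k A Y i p ⊆ Y i p
  | 0, _ => empty_subset _
  | i + 1, p => by
    rw [selection]
    split_ifs with h
    exacts [(exists_subset_card_eq h.2).choose_spec.1, empty_subset _]

variable {k A Y}

lemma card_selection_succ {i : ℕ} (hAY : ∀ p ∈ A i, k ≤ #(Y (i + 1) p)) (p : Ω') :
    #(selection k A Y (i + 1) p) = (A i).indicator (fun _ => k) p := by
  by_cases hp : p ∈ A i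
  · rw [selection, dif_pos ⟨hp, hAY p hp⟩, Set.indicator_of_mem hp]
    exact (exists_subset_card_eq (hAY p hp)).choose_spec.2
  · rw [selection, dif_neg (fun h => hp h.1), Set.indicator_of_notMem hp, card_empty]

lemma card_selection_succ_eq_zero_or_eq {i : ℕ} (hAY : ∀ p ∈ A i, k ≤ #(Y (i + 1) p))
    (p : Ω') : #(selection k A Y (i + 1) p) = 0 ∨ #(selection k A Y (i + 1) p) = k := by
  rw [card_selection_succ hAY]
  by_cases hp : p ∈ A i <;> simp [hp]

variable [MeasurableSpace Ω'] {μ : Measure Ω'}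

lemma iIndepFun_card_selection_succ {d : ℕ} (hAY : ∀ i, ∀ p ∈ A i, k ≤ #(Y (i + 1) p))
    (hA : iIndepSet (fun i : Fin d => A i) μ) :
    iIndepFun (fun (i : Fin d) p => #(selection k A Y (i + 1) p)) μ := by
  have hind : ∀ i : Fin d, (fun p => (A i).indicator (fun _ => k) p) =
      (k * ·) ∘ (A i).indicator (fun _ => 1) := fun i => by
    ext p; by_cases hp : p ∈ A i <;> simp [hp]
  simp_rw [card_selection_succ (hAY _), hind]
  exact hA.iIndepFun_indicator.comp _ fun _ => measurable_from_top

lemma measure_card_selection_succ [IsProbabilityMeasure μ] (hk : k ≠ 0) {i : ℕ}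
    (hAi : MeasurableSet (A i)) (hAY : ∀ p ∈ A i, k ≤ #(Y (i + 1) p)) :
    μ {p | #(selection k A Y (i + 1) p) = k} = μ (A i) ∧
      μ {p | #(selection k A Y (i + 1) p) = 0} = 1 - μ (A i) := by
  constructor
  · congr 1; ext p; by_cases hp : p ∈ A i <;> simp [card_selection_succ hAY, hp, hk]
  · rw [← prob_compl_eq_one_sub hAi]
    congr 1; ext p; by_cases hp : p ∈ A i <;> simp [card_selection_succ hAY, hp, hk]

end Selection

end Decoupling

open Decoupling

theorem decoupling_lemma_general {Ω : Type u} {α : Type v} [m : MeasurableSpace Ω]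
    (P : Measure Ω) [IsProbabilityMeasure P] (d k : ℕ) (hk : 0 < k)
    (ε : ℝ) (hε0 : 0 < ε)
    (F : ℕ → MeasurableSpace Ω) (hF : ∀ i, F i ≤ m) (hFmono : Monotone F)
    (Y : ℕ → Ω → Finset α)
    (hYmeas : ∀ i, Measurable[F (i + 1)] fun ω => (Y (i + 1) ω).card)
    (hcond : ∀ i < d, ∀ᵐ ω ∂P,
      ε ≤ (P[({ω' | k ≤ (Y (i + 1) ω').card}).indicator (fun _ => (1 : ℝ)) | F i]) ω) :
    ∃ (Ω' : Type (max u v)) (_ : MeasurableSpace Ω') (P' : Measure Ω')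
      (pr : Ω' → Ω) (X : ℕ → Ω' → Finset α),
      IsProbabilityMeasure P' ∧ MeasurePreserving pr P' P ∧
      (∀ i, 1 ≤ i → i ≤ d → ∀ ω, X i ω ⊆ Y i (pr ω) ∧
        ((X i ω).card = 0 ∨ (X i ω).card = k)) ∧
      iIndepFun
        (fun (i : Fin d) ω => (X ((i : ℕ) + 1) ω).card) P' ∧
      (∀ i, 1 ≤ i → i ≤ d →
        P' {ω | (X i ω).card = k} = ENNReal.ofReal ε ∧
        P' {ω | (X i ω).card = 0} = ENNReal.ofReal (1 - ε)) := by
  set B : ℕ → Set Ω := fun i => {ω | k ≤ (Y (i + 1) ω).card}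
  have hB : ∀ i, MeasurableSet[F (i + 1)] (B i) := fun i => hYmeas i measurableSet_Ici
  set A := acceptance.{v} (thinning P F B ε)
  have hA : ∀ i, MeasurableSet (A i) := fun i => measurableSet_acceptance
    ((stronglyMeasurable_thinning hFmono hB i).mono (hF _)).measurable
  have hAY : ∀ i, ∀ p ∈ A i, k ≤ #(Y (i + 1) p.1) := fun i _ => fst_mem_of_mem_acceptance_thinning
  have hAε : ∀ S : Finset ℕ, (∀ i ∈ S, i < d) →
      (P.prod noiseMeasure) (⋂ i ∈ S, A i) = ENNReal.ofReal ε ^ #S := fun S hS =>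
    measure_prod_biInter_acceptance_thinning hF hFmono hB hε0 S fun i hi => hcond i (hS i hi)
  refine ⟨Ω × Noise.{v}, inferInstance, P.prod noiseMeasure, Prod.fst,
    selection k A fun i p => Y i p.1, inferInstance, measurePreserving_fst, ?_,
    iIndepFun_card_selection_succ hAY (iIndepSet_of_measure_biInter_eq_pow hA hAε), ?_⟩
  · rintro i hi - p
    obtain ⟨j, rfl⟩ := Nat.exists_eq_add_of_le' hi
    exact ⟨selection_subset k A _ _ p, card_selection_succ_eq_zero_or_eq (hAY j) p⟩
  · rintro i hi hid
    obtain ⟨j, rfl⟩ := Nat.exists_eq_add_of_le' hi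
    have hAj : (P.prod noiseMeasure) (A j) = ENNReal.ofReal ε := by
      simpa using hAε {j} (by simpa using hid)
    obtain ⟨hk_eq, h0_eq⟩ :=
      measure_card_selection_succ (μ := P.prod noiseMeasure) (Y := fun i p => Y i p.1) hk.ne' (hA j)
        (hAY j)
    rw [hk_eq, h0_eq, hAj, ENNReal.ofReal_sub 1 hε0.le, ENNReal.ofReal_one]
    exact ⟨rfl, rfl⟩

/-- Decoupling lemma: if random finite sets `Y_1, …, Y_d` adapted to a filtration
satisfy `P(|Y_{i+1}| ≥ k | F_i) ≥ ε` a.s., then on an enlarged probability space there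
are random subsets `X_i ⊆ Y_i` with `|X_i| ∈ {0, k}`, the cardinalities
`|X_1|, …, |X_d|` independent, and `P(|X_i| = k) = ε`, `P(|X_i| = 0) = 1 - ε`. -/
theorem decoupling_lemma {Ω : Type u} {α : Type v} [m : MeasurableSpace Ω]
    (P : Measure Ω) [IsProbabilityMeasure P] (d k : ℕ) (hk : 0 < k)
    (ε : ℝ) (hε0 : 0 < ε) (hε1 : ε < 1)
    (F : ℕ → MeasurableSpace Ω) (hF : ∀ i, F i ≤ m) (hFmono : Monotone F)
    (Y : ℕ → Ω → Finset α)
    (hYmeas : ∀ i, Measurable[F (i + 1)] fun ω => (Y (i + 1) ω).card)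
    (hcond : ∀ i < d, ∀ᵐ ω ∂P,
      ε ≤ (P[({ω' | k ≤ (Y (i + 1) ω').card}).indicator (fun _ => (1 : ℝ)) | F i]) ω) :
    ∃ (Ω' : Type (max u v)) (_ : MeasurableSpace Ω') (P' : Measure Ω')
      (pr : Ω' → Ω) (X : ℕ → Ω' → Finset α),
      IsProbabilityMeasure P' ∧ MeasurePreserving pr P' P ∧
      (∀ i, 1 ≤ i → i ≤ d → ∀ ω, X i ω ⊆ Y i (pr ω) ∧
        ((X i ω).card = 0 ∨ (X i ω).card = k)) ∧
      iIndepFun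
        (fun (i : Fin d) ω => (X ((i : ℕ) + 1) ω).card) P' ∧
      (∀ i, 1 ≤ i → i ≤ d →
        P' {ω | (X i ω).card = k} = ENNReal.ofReal ε ∧
        P' {ω | (X i ω).card = 0} = ENNReal.ofReal (1 - ε)) :=
  decoupling_lemma_general (m := m) P d k hk ε hε0 F hF hFmono Y hYmeas hcond
end

section
/- Let 0 < γ < 1 and β < \tildeβ. There exists n_0 ∈ ℕ such that for all n_0 ≤ m < r: 1 - exp(-\tildeπ((-Σ_{k=m}^{r} 1/k, -Σ_{k=m+1}^{r} 1/k])) ≥ β m^{-γ} r^{γ-1}, where \tildeπ(dx) = \tildeβ(e^{γx}1_{x>0}+e^{(1-γ)x}1_{x<0})dx. -/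
/-!
The interval `(-(1/m + S), -S]`, with `S = ∑_{k=m+1}^r 1/k ≤ log (r/m)`, has length `1/m` and lies
in the negative half-line, where the density is `β̃ e^{(1-γ)x} ≤ β̃`. Hence its mass `I` satisfies
`β̃ e^{-(1-γ)/m} m^{-γ} r^{γ-1} ≤ I ≤ β̃/m`, and `1 - e^{-I} ≥ I e^{-I}` gives
`1 - e^{-I} ≥ β̃ e^{-(1-γ+β̃)/m} m^{-γ} r^{γ-1}`, whose prefactor exceeds `β` once `m` is large.
-/

open Real MeasureTheory Finset Filter

lemma mul_exp_neg_le_one_sub_exp_neg (x : ℝ) : x * exp (-x) ≤ 1 - exp (-x) := by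
  have h := mul_le_mul_of_nonneg_right (add_one_le_exp x) (exp_pos (-x)).le
  rwa [← exp_add, add_neg_cancel, exp_zero, add_mul, one_mul, ← le_sub_iff_add_le] at h

lemma eventually_pos_and_le_mul_exp_neg_div {β C : ℝ} (c : ℝ) (h : β < C) :
    ∀ᶠ m : ℕ in atTop, 0 < m ∧ β ≤ C * exp (-(c / m)) := by
  have hlim : Tendsto (fun m : ℕ => C * exp (-(c / m))) atTop (nhds C) := by
    simpa using ((tendsto_const_div_atTop_nhds_zero_nat c).neg.rexp).const_mul C
  exact (eventually_gt_atTop 0).and ((hlim.eventually (lt_mem_nhds h)).mono fun _ => le_of_lt)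

lemma sum_Icc_one_div_eq_add {m r : ℕ} (hmr : m ≤ r) :
    ∑ k ∈ Icc m r, (1 : ℝ) / k = 1 / m + ∑ k ∈ Icc (m + 1) r, (1 : ℝ) / k := by
  rw [Icc_add_one_left_eq_Ioc, Icc_eq_cons_Ioc hmr, sum_cons]

lemma sum_Icc_succ_one_div_pos {m r : ℕ} (hmr : m < r) :
    0 < ∑ k ∈ Icc (m + 1) r, (1 : ℝ) / k :=
  sum_pos (fun k hk => one_div_pos.2 <| Nat.cast_pos.2 <| by grind) ⟨r, mem_Icc.2 ⟨hmr, le_rfl⟩⟩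

lemma sum_Icc_succ_one_div_le_log_sub {m r : ℕ} (hm : 0 < m) (hmr : m ≤ r) :
    ∑ k ∈ Icc (m + 1) r, (1 : ℝ) / k ≤ log r - log m := by
  induction r, hmr using Nat.le_induction with
  | base => simp
  | succ r hmr ih =>
    have hr : (0 : ℝ) < r := by exact_mod_cast hm.trans_le hmr
    have hstep := one_sub_inv_le_log_of_pos (x := (r + 1) / r) (by positivity)
    rw [log_div (by positivity) hr.ne', inv_div, one_sub_div (by positivity),
      add_sub_cancel_left] at hstep
    rw [sum_Icc_succ_top (by omega), Nat.cast_add_one]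
    linarith

lemma setIntegral_Ioc_density_eq_of_neg {γ tβ a b : ℝ} (hb : b < 0) :
    ∫ x in Set.Ioc a b, tβ * ((if 0 < x then exp (γ * x) else 0)
        + (if x < 0 then exp ((1 - γ) * x) else 0))
      = ∫ x in Set.Ioc a b, tβ * exp ((1 - γ) * x) := by
  refine setIntegral_congr_fun measurableSet_Ioc fun x hx => ?_
  have hx : x < 0 := hx.2.trans_lt hb
  simp [hx, hx.not_gt]

section ExpIntegral

variable {a b c C : ℝ}

lemma mul_exp_mul_le_setIntegral_Ioc (hc : 0 ≤ c) (hC : 0 ≤ C) (hab : a ≤ b) :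
    (b - a) * (C * exp (c * a)) ≤ ∫ x in Set.Ioc a b, C * exp (c * x) := by
  rw [← intervalIntegral.integral_of_le hab]
  calc (b - a) * (C * exp (c * a))
      = ∫ _ in a..b, C * exp (c * a) := by rw [intervalIntegral.integral_const, smul_eq_mul]
    _ ≤ ∫ x in a..b, C * exp (c * x) :=
      intervalIntegral.integral_mono_on hab intervalIntegrable_const
        ((by fun_prop : Continuous fun x => C * exp (c * x)).intervalIntegrable _ _)
        fun x hx => by gcongr; exact hx.1

lemma setIntegral_Ioc_mul_exp_le (hc : 0 ≤ c) (hC : 0 ≤ C) (hab : a ≤ b) (hb : b ≤ 0) :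
    ∫ x in Set.Ioc a b, C * exp (c * x) ≤ (b - a) * C := by
  rw [← intervalIntegral.integral_of_le hab]
  calc ∫ x in a..b, C * exp (c * x) ≤ ∫ _ in a..b, C :=
      intervalIntegral.integral_mono_on hab
        ((by fun_prop : Continuous fun x => C * exp (c * x)).intervalIntegrable _ _)
        intervalIntegrable_const fun x hx => mul_le_of_le_one_right hC <|
          exp_le_one_iff.2 <| mul_nonpos_of_nonneg_of_nonpos hc (hx.2.trans hb)
    _ = (b - a) * C := by rw [intervalIntegral.integral_const, smul_eq_mul]

end ExpIntegral

lemma rpow_neg_mul_rpow_sub_one_le {γ m r S : ℝ} (hγ : γ ≤ 1) (hm : 0 < m) (hr : 0 < r)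
    (hS : S ≤ log r - log m) :
    m ^ (-γ) * r ^ (γ - 1) ≤ exp (-((1 - γ) * S)) / m := by
  rw [rpow_def_of_pos hm, rpow_def_of_pos hr, ← exp_add, le_div_iff₀ hm]
  nth_rewrite 2 [← exp_log hm]
  rw [← exp_add]
  gcongr
  nlinarith [mul_le_mul_of_nonneg_left hS (sub_nonneg.2 hγ)]

lemma exp_mul_rpow_le_setIntegral_Ioc {γ C m r S : ℝ} (hγ : γ ≤ 1) (hC : 0 ≤ C) (hm : 0 < m)
    (hr : 0 < r) (hS : S ≤ log r - log m) :
    C * exp (-((1 - γ) / m)) * (m ^ (-γ) * r ^ (γ - 1))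
      ≤ ∫ x in Set.Ioc (-(1 / m + S)) (-S), C * exp ((1 - γ) * x) :=
  calc C * exp (-((1 - γ) / m)) * (m ^ (-γ) * r ^ (γ - 1))
      ≤ C * exp (-((1 - γ) / m)) * (exp (-((1 - γ) * S)) / m) := by
        gcongr; exact rpow_neg_mul_rpow_sub_one_le hγ hm hr hS
    _ = (-S - -(1 / m + S)) * (C * exp ((1 - γ) * -(1 / m + S))) := by
        rw [show (1 - γ) * -(1 / m + S) = -((1 - γ) / m) + -((1 - γ) * S) by ring, exp_add]
        ring
    _ ≤ _ := mul_exp_mul_le_setIntegral_Ioc (sub_nonneg.2 hγ) hC (by linarith [one_div_pos.2 hm])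

theorem interval_mass_lower_bound_general (γ β tβ : ℝ) (hγ1 : γ < 1)
    (hβ0 : 0 < β) (hβ : β < tβ) :
    ∃ n₀ : ℕ, ∀ m r : ℕ, n₀ ≤ m → m < r →
      β * (m : ℝ) ^ (-γ) * (r : ℝ) ^ (γ - 1)
        ≤ 1 - Real.exp (-(∫ x in Set.Ioc (-(∑ k ∈ Icc m r, (1 : ℝ) / k))
              (-(∑ k ∈ Icc (m + 1) r, (1 : ℝ) / k)),
            tβ * ((if 0 < x then Real.exp (γ * x) else 0)
              + (if x < 0 then Real.exp ((1 - γ) * x) else 0)))) := by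
  have htβ : 0 ≤ tβ := (hβ0.trans hβ).le
  obtain ⟨n₀, hn₀⟩ := eventually_atTop.1 (eventually_pos_and_le_mul_exp_neg_div (1 - γ + tβ) hβ)
  refine ⟨n₀, fun m r hn₀m hmr => ?_⟩
  obtain ⟨hm, hβm⟩ := hn₀ m hn₀m
  have hm' : (0 : ℝ) < m := Nat.cast_pos.2 hm
  have hS := sum_Icc_succ_one_div_pos hmr
  rw [sum_Icc_one_div_eq_add hmr.le, setIntegral_Ioc_density_eq_of_neg (neg_neg_of_pos hS)]
  set S := ∑ k ∈ Icc (m + 1) r, (1 : ℝ) / k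
  set I := ∫ x in Set.Ioc (-(1 / m + S)) (-S), tβ * exp ((1 - γ) * x)
  have hlow : tβ * exp (-((1 - γ) / m)) * ((m : ℝ) ^ (-γ) * (r : ℝ) ^ (γ - 1)) ≤ I :=
    exp_mul_rpow_le_setIntegral_Ioc hγ1.le htβ hm' (Nat.cast_pos.2 (hm.trans hmr))
      (sum_Icc_succ_one_div_le_log_sub hm hmr.le)
  have hup : I ≤ tβ / m := by
    have := setIntegral_Ioc_mul_exp_le (a := -(1 / m + S)) (sub_nonneg.2 hγ1.le) htβ
      (by linarith [one_div_pos.2 hm']) (neg_nonpos.2 hS.le)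
    rwa [neg_sub_neg, add_sub_cancel_right, one_div_mul_eq_div] at this
  calc β * (m : ℝ) ^ (-γ) * (r : ℝ) ^ (γ - 1)
      ≤ tβ * exp (-((1 - γ + tβ) / m)) * ((m : ℝ) ^ (-γ) * (r : ℝ) ^ (γ - 1)) := by
        rw [mul_assoc]; gcongr
    _ = tβ * exp (-((1 - γ) / m)) * ((m : ℝ) ^ (-γ) * (r : ℝ) ^ (γ - 1)) * exp (-(tβ / m)) := by
        rw [add_div, neg_add, exp_add]; ring
    _ ≤ I * exp (-I) := by gcongr
    _ ≤ 1 - exp (-I) := mul_exp_neg_le_one_sub_exp_neg I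

/-- Lower coupling inequality: for `0 < γ < 1` and `β < β̃` there exists `n₀` such that
for all `n₀ ≤ m < r`,
`1 - exp(-π̃((-Σ_{k=m}^r 1/k, -Σ_{k=m+1}^r 1/k])) ≥ β m^{-γ} r^{γ-1}`, where
`π̃(dx) = β̃(e^{γx}1_{x>0} + e^{(1-γ)x}1_{x<0})dx`. -/
theorem interval_mass_lower_bound (γ β tβ : ℝ) (hγ0 : 0 < γ) (hγ1 : γ < 1)
    (hβ0 : 0 < β) (hβ : β < tβ) :
    ∃ n₀ : ℕ, ∀ m r : ℕ, n₀ ≤ m → m < r →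
      β * (m : ℝ) ^ (-γ) * (r : ℝ) ^ (γ - 1)
        ≤ 1 - Real.exp (-(∫ x in Set.Ioc (-(∑ k ∈ Icc m r, (1 : ℝ) / k))
              (-(∑ k ∈ Icc (m + 1) r, (1 : ℝ) / k)),
            tβ * ((if 0 < x then Real.exp (γ * x) else 0)
              + (if x < 0 then Real.exp ((1 - γ) * x) else 0)))) :=
  interval_mass_lower_bound_general γ β tβ hγ1 hβ0 hβ
end

section
/- Let 0 < γ < 1 and \tildeβ < β. There exists a constant C > 0 and for each u ∈ (0,1) an m(u) such that for all m ≥ m(u) and all bum ≤ s < r ≤ m: 1 - exp(-\tildeπ((-Σ_{k=s}^{r-1} 1/k, -Σ_{k=s+1}^{r-1} 1/k])) ≤ β s^{-γ} r^{γ-1}, where \tildeπ(dx) = \tildeβ(e^{γx}1_{x>0}+e^{(1-γ)x}1_{x<0})dx and 0 < b < 1 is fixed. -/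
open Real MeasureTheory Finset

/-!
On `(-A, -B]`, where `B = ∑_{k=s+1}^{r-1} 1/k ≥ log (r / (s + 1))` and `A = B + 1/s`, only the
branch `x < 0` of the density is active, so the density is at most
`tβ e^{-(1-γ)B} ≤ tβ ((s + 1) / r)^{1-γ}`, and the mass of this interval of length `1/s` is at
most `tβ (1 + 1/s) s^{-γ} r^{γ-1}`. As `1 - e^{-x} ≤ x`, it remains to take `m`, hence
`s ≥ b u m`, so large that `tβ (1 + 1/s) ≤ β`.
-/

theorem log_sub_log_le_sum_Ico_inv {a n : ℕ} (ha : 0 < a) (han : a ≤ n) :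
    log n - log a ≤ ∑ k ∈ Ico a n, (k : ℝ)⁻¹ := by
  have ha' : (0 : ℝ) < a := by exact_mod_cast ha
  have hn' : (0 : ℝ) < n := ha'.trans_le (by exact_mod_cast han)
  rw [← log_div hn'.ne' ha'.ne', ← integral_inv_of_pos ha' hn']
  exact (inv_antitoneOn_Icc_right ha').integral_le_sum_Ico han

theorem setIntegral_Ioc_le_of_le_const {f : ℝ → ℝ} {a b C : ℝ} (hab : a ≤ b)
    (hf0 : ∀ x ∈ Set.Ioc a b, 0 ≤ f x) (hfC : ∀ x ∈ Set.Ioc a b, f x ≤ C) :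
    ∫ x in Set.Ioc a b, f x ≤ C * (b - a) := by
  have hnorm := norm_setIntegral_le_of_norm_le_const (f := f) (C := C)
    (measure_Ioc_lt_top (μ := volume)) fun x hx ↦ by
      rw [Real.norm_of_nonneg (hf0 x hx)]; exact hfC x hx
  rw [Real.volume_real_Ioc_of_le hab] at hnorm
  exact (le_abs_self _).trans hnorm

theorem exp_mul_neg_le_rpow_div {p a b B : ℝ} (hp : 0 ≤ p) (ha : 0 < a) (hb : 0 < b)
    (hB : log b - log a ≤ B) : exp (p * -B) ≤ (a / b) ^ p := by
  rw [rpow_def_of_pos (div_pos ha hb), log_div ha.ne' hb.ne', mul_comm p]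
  gcongr
  linarith

theorem add_one_div_rpow_div_le {s r p : ℝ} (hs : 0 < s) (hr : 0 < r) (hp : p ≤ 1) :
    ((s + 1) / r) ^ p / s ≤ (1 + 1 / s) * s ^ (p - 1) * r ^ (-p) := by
  have hsplit : (s + 1) / r = (1 + 1 / s) * (s / r) := by field_simp
  have hone : (1 + 1 / s) ^ p ≤ 1 + 1 / s :=
    rpow_le_self_of_one_le (by simp only [le_add_iff_nonneg_right]; positivity) hp
  rw [hsplit, mul_rpow (by positivity) (by positivity), div_rpow hs.le hr.le, rpow_neg hr.le,
    rpow_sub_one hs.ne']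
  calc (1 + 1 / s) ^ p * (s ^ p / r ^ p) / s = (1 + 1 / s) ^ p * (s ^ p / s) * (r ^ p)⁻¹ := by
        ring
    _ ≤ (1 + 1 / s) * (s ^ p / s) * (r ^ p)⁻¹ := by gcongr

theorem sum_Icc_one_div_eq_one_div_add {s r : ℕ} (hsr : s < r) :
    ∑ k ∈ Icc s (r - 1), (1 : ℝ) / k
      = 1 / s + ∑ k ∈ Icc (s + 1) (r - 1), (1 : ℝ) / k := by
  rw [Icc_eq_cons_Ioc (by omega), sum_cons, ← Icc_add_one_left_eq_Ioc]

theorem log_sub_log_le_sum_Icc_one_div {s r : ℕ} (hsr : s < r) :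
    log r - log (s + 1) ≤ ∑ k ∈ Icc (s + 1) (r - 1), (1 : ℝ) / k := by
  have hIcc : Icc (s + 1) (r - 1) = Ico (s + 1) r := by
    rw [← Ico_add_one_right_eq_Icc, Nat.sub_add_cancel (by omega)]
  simpa [hIcc] using log_sub_log_le_sum_Ico_inv (Nat.succ_pos s) hsr

noncomputable def tildePiDensity (γ tβ x : ℝ) : ℝ :=
  tβ * ((if 0 < x then exp (γ * x) else 0) + (if x < 0 then exp ((1 - γ) * x) else 0))

section Density

variable {γ tβ : ℝ}

theorem tildePiDensity_nonneg (htβ : 0 ≤ tβ) (x : ℝ) : 0 ≤ tildePiDensity γ tβ x := by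
  unfold tildePiDensity
  apply mul_nonneg htβ
  apply add_nonneg <;> split_ifs <;> positivity

theorem tildePiDensity_le_of_le_of_nonpos (hγ : γ ≤ 1) (htβ : 0 ≤ tβ) {x y : ℝ}
    (hxy : x ≤ y) (hy : y ≤ 0) : tildePiDensity γ tβ x ≤ tβ * exp ((1 - γ) * y) := by
  unfold tildePiDensity
  rw [if_neg (hxy.trans hy).not_gt, zero_add]
  gcongr
  split_ifs
  · gcongr
  · positivity

theorem setIntegral_tildePiDensity_Ioc_le (hγ : γ ≤ 1) (htβ : 0 ≤ tβ) {y h : ℝ}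
    (hy : y ≤ 0) (hh : 0 ≤ h) :
    ∫ x in Set.Ioc (y - h) y, tildePiDensity γ tβ x ≤ tβ * exp ((1 - γ) * y) * h := by
  have := setIntegral_Ioc_le_of_le_const (f := tildePiDensity γ tβ) (a := y - h) (b := y)
    (by linarith) (fun x _ ↦ tildePiDensity_nonneg htβ x)
    (fun x hx ↦ tildePiDensity_le_of_le_of_nonpos hγ htβ hx.2 hy)
  rwa [sub_sub_cancel] at this

theorem setIntegral_tildePiDensity_le (hγ0 : 0 ≤ γ) (hγ1 : γ ≤ 1) (htβ : 0 ≤ tβ)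
    {s r : ℕ} (hs : 0 < s) (hsr : s < r) :
    ∫ x in Set.Ioc (-(∑ k ∈ Icc s (r - 1), (1 : ℝ) / k))
        (-(∑ k ∈ Icc (s + 1) (r - 1), (1 : ℝ) / k)), tildePiDensity γ tβ x
      ≤ tβ * (1 + 1 / s) * (s : ℝ) ^ (-γ) * (r : ℝ) ^ (γ - 1) := by
  set B := ∑ k ∈ Icc (s + 1) (r - 1), (1 : ℝ) / k
  have hs' : (0 : ℝ) < s := by exact_mod_cast hs
  have hr' : (0 : ℝ) < r := by exact_mod_cast hs.trans hsr
  have hB : 0 ≤ B := sum_nonneg fun k _ ↦ by positivity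
  have hA : -(∑ k ∈ Icc s (r - 1), (1 : ℝ) / k) = -B - 1 / s := by
    rw [sum_Icc_one_div_eq_one_div_add hsr]; ring
  have hexp : exp ((1 - γ) * -B) ≤ ((s + 1) / r) ^ (1 - γ) :=
    exp_mul_neg_le_rpow_div (by linarith) (by positivity) hr' (log_sub_log_le_sum_Icc_one_div hsr)
  have hrpow := add_one_div_rpow_div_le hs' hr' (p := 1 - γ) (by linarith)
  rw [sub_sub_cancel_left, neg_sub] at hrpow
  rw [hA]
  calc _ ≤ tβ * exp ((1 - γ) * -B) * (1 / s) :=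
        setIntegral_tildePiDensity_Ioc_le hγ1 htβ (by linarith) (by positivity)
    _ ≤ tβ * (((s + 1) / r) ^ (1 - γ) / s) := by
        rw [mul_one_div, mul_div_assoc]; gcongr
    _ ≤ _ := by rw [mul_assoc, mul_assoc]; gcongr; linarith [hrpow]

end Density

theorem interval_mass_upper_bound_general (γ β tβ b : ℝ) (hγ0 : 0 < γ) (hγ1 : γ < 1)
    (htβ : 0 < tβ) (hβ : tβ < β) (hb0 : 0 < b) :
    ∀ u : ℝ, 0 < u → u < 1 → ∃ M : ℕ, ∀ m s r : ℕ, M ≤ m →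
      b * u * m ≤ (s : ℝ) → s < r → r ≤ m →
      1 - Real.exp (-(∫ x in Set.Ioc (-(∑ k ∈ Icc s (r - 1), (1 : ℝ) / k))
              (-(∑ k ∈ Icc (s + 1) (r - 1), (1 : ℝ) / k)),
            tβ * ((if 0 < x then Real.exp (γ * x) else 0)
              + (if x < 0 then Real.exp ((1 - γ) * x) else 0))))
        ≤ β * (s : ℝ) ^ (-γ) * (r : ℝ) ^ (γ - 1) := by
  intro u hu0 _
  -- `s ≥ tβ / (β - tβ)` is exactly what absorbs the factor `1 + 1 / s`.
  set c := max (tβ / (β - tβ)) 1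
  refine ⟨⌈c / (b * u)⌉₊, fun m s r hm hs hsr _ ↦ ?_⟩
  have hcs : c ≤ s := by
    have := (Nat.le_ceil _).trans (Nat.cast_le.mpr hm : (⌈c / (b * u)⌉₊ : ℝ) ≤ m)
    rw [div_le_iff₀ (by positivity)] at this
    linarith
  have hs0 : (0 : ℝ) < s := by linarith [le_max_right (tβ / (β - tβ)) 1]
  have hcoef : tβ * (1 + 1 / s) ≤ β := by
    have := (le_max_left _ _).trans hcs
    rw [div_le_iff₀ (by linarith)] at this
    rw [mul_one_add, mul_one_div, ← le_sub_iff_add_le', div_le_iff₀ hs0]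
    linarith
  have one_sub_exp_neg_le (x : ℝ) : 1 - exp (-x) ≤ x := by linarith [add_one_le_exp (-x)]
  calc _ ≤ tβ * (1 + 1 / s) * (s : ℝ) ^ (-γ) * (r : ℝ) ^ (γ - 1) :=
        (one_sub_exp_neg_le _).trans <|
          setIntegral_tildePiDensity_le hγ0.le hγ1.le htβ.le (by exact_mod_cast hs0) hsr
    _ ≤ β * (s : ℝ) ^ (-γ) * (r : ℝ) ^ (γ - 1) := by gcongr

/-- Upper coupling inequality: for `0 < γ < 1`, `β̃ < β` and fixed `0 < b < 1`, for each
`u ∈ (0,1)` there is `m(u)` such that for all `m ≥ m(u)` and all `bum ≤ s < r ≤ m`,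
`1 - exp(-π̃((-Σ_{k=s}^{r-1} 1/k, -Σ_{k=s+1}^{r-1} 1/k])) ≤ β s^{-γ} r^{γ-1}`, where
`π̃(dx) = β̃(e^{γx}1_{x>0} + e^{(1-γ)x}1_{x<0})dx`. -/
theorem interval_mass_upper_bound (γ β tβ b : ℝ) (hγ0 : 0 < γ) (hγ1 : γ < 1)
    (htβ : 0 < tβ) (hβ : tβ < β) (hb0 : 0 < b) (hb1 : b < 1) :
    ∀ u : ℝ, 0 < u → u < 1 → ∃ M : ℕ, ∀ m s r : ℕ, M ≤ m →
      b * u * m ≤ (s : ℝ) → s < r → r ≤ m →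
      1 - Real.exp (-(∫ x in Set.Ioc (-(∑ k ∈ Icc s (r - 1), (1 : ℝ) / k))
              (-(∑ k ∈ Icc (s + 1) (r - 1), (1 : ℝ) / k)),
            tβ * ((if 0 < x then Real.exp (γ * x) else 0)
              + (if x < 0 then Real.exp ((1 - γ) * x) else 0))))
        ≤ β * (s : ℝ) ^ (-γ) * (r : ℝ) ^ (γ - 1) :=
  interval_mass_upper_bound_general γ β tβ b hγ0 hγ1 htβ hβ hb0
end
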